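/- With u_∞, s, N, p, α as above (N+2s < α < (p/2)(N+2s)), there exists C > 0 such that for all y, z with |y−z| ≥ (2/3)R ≥ 2/3 and |y|,|z| ≥ R: ∫_{ℝ^N} u_∞(x−y)^{p/2} u_∞(x−z)^{p/2} dx ≤ C R^{N+2s−α} A_{y,z}. -/

import Mathlib

open Real MeasureTheory Metric Module

/-!
Write `m = N + 2s`, `q = p / 2` and `⟨x⟩ = 1 + ‖x‖`; the hypotheses make `u` comparable to
`⟨x⟩^(-m)`. Since one of `x - y`, `x - z` always has norm at least `‖y - z‖ / 2`, the integral of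
`u(x - y)^q u(x - z)^q` is `O(⟨y - z⟩^(-qm))`, while `A_{y,z}` is at least a multiple of
`⟨y - z⟩^(-m)`, as seen by integrating over the unit ball around `y`. The excess decay
`⟨y - z⟩^(m - qm)` is at most a multiple of `R^(m - α)`, because `⟨y - z⟩ ≥ 2R/3`, `R ≥ 1`
and `m - qm < m - α < 0`.
-/

namespace Real

lemma one_add_rpow_le_two_mul_one_add_rpow {t m : ℝ} (ht : 0 ≤ t) (hm : 0 ≤ m) :
    1 + t ^ m ≤ 2 * (1 + t) ^ m := by
  have h1 : 1 ≤ (1 + t) ^ m := one_le_rpow (by linarith) hm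
  have h2 : t ^ m ≤ (1 + t) ^ m := rpow_le_rpow ht (by linarith) hm
  linarith

lemma one_add_rpow_le_two_rpow_mul {t m : ℝ} (ht : 0 ≤ t) (hm : 0 ≤ m) :
    (1 + t) ^ m ≤ 2 ^ m * (1 + t ^ m) := by
  have hmax : max 1 t ^ m ≤ 1 + t ^ m := by
    rcases le_total t 1 with h | h
    · rw [max_eq_left h, one_rpow]; linarith [rpow_nonneg ht m]
    · rw [max_eq_right h]; linarith
  calc (1 + t) ^ m ≤ (2 * max 1 t) ^ m := by
        gcongr; linarith [le_max_left 1 t, le_max_right 1 t]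
    _ = 2 ^ m * max 1 t ^ m := mul_rpow zero_le_two (zero_le_one.trans (le_max_left _ _))
    _ ≤ 2 ^ m * (1 + t ^ m) := by gcongr

lemma half_mul_one_add_rpow_neg_le_div {c t m : ℝ} (hc : 0 ≤ c) (ht : 0 ≤ t) (hm : 0 ≤ m) :
    c / 2 * (1 + t) ^ (-m) ≤ c / (1 + t ^ m) := by
  rw [rpow_neg (by linarith), ← div_eq_mul_inv, div_div]
  gcongr
  exact one_add_rpow_le_two_mul_one_add_rpow ht hm

lemma div_one_add_rpow_le_two_rpow_mul {c t m : ℝ} (hc : 0 ≤ c) (ht : 0 ≤ t) (hm : 0 ≤ m) :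
    c / (1 + t ^ m) ≤ 2 ^ m * c * (1 + t) ^ (-m) := by
  have h1 : 0 < (1 + t) ^ m := rpow_pos_of_pos (by linarith) m
  rw [rpow_neg (by linarith), ← div_eq_mul_inv, div_le_div_iff₀ (by positivity) h1]
  nlinarith [one_add_rpow_le_two_rpow_mul ht hm]

lemma rpow_neg_le_mul_rpow_neg {d R c a b : ℝ} (hc : 0 < c) (hR : 1 ≤ R) (hd : c * R ≤ d)
    (hab : b ≤ a) (hb : 0 ≤ b) : d ^ (-a) ≤ c ^ (-a) * R ^ (-b) := by
  calc d ^ (-a) ≤ (c * R) ^ (-a) :=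
        rpow_le_rpow_of_nonpos (by positivity) hd (by linarith)
    _ = c ^ (-a) * R ^ (-a) := mul_rpow hc.le (by linarith)
    _ ≤ c ^ (-a) * R ^ (-b) := by gcongr

lemma le_mul_rpow_mul_of_decay_bounds {I A K ζ D R c m a b : ℝ} (hK : 0 ≤ K) (hζ : 0 < ζ)
    (hc : 0 < c) (hR : 1 ≤ R) (hD : c * R ≤ D) (hmb : m ≤ b) (hba : b ≤ a)
    (hI : I ≤ K * D ^ (-a)) (hA : ζ * D ^ (-m) ≤ A) :
    I ≤ K * c ^ (-(a - m)) / ζ * R ^ (m - b) * A := by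
  have hD0 : 0 < D := by nlinarith
  calc I ≤ K * D ^ (-a) := hI
    _ = K * D ^ (-(a - m)) * D ^ (-m) := by
        rw [mul_assoc, ← rpow_add hD0]; ring_nf
    _ ≤ K * (c ^ (-(a - m)) * R ^ (-(b - m))) * D ^ (-m) := by
        gcongr
        exact rpow_neg_le_mul_rpow_neg hc hR hD (by linarith) (by linarith)
    _ = K * c ^ (-(a - m)) / ζ * R ^ (m - b) * (ζ * D ^ (-m)) := by
        rw [neg_sub b m]; field_simp
    _ ≤ K * c ^ (-(a - m)) / ζ * R ^ (m - b) * A := by gcongr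

lemma rpow_le_of_le_mul_rpow_neg {v C t m q : ℝ} (ht : 0 < t) (hv : 0 ≤ v) (hq : 0 ≤ q)
    (hvC : v ≤ C * t ^ (-m)) : v ^ q ≤ C ^ q * t ^ (-(q * m)) := by
  have hC : 0 ≤ C := nonneg_of_mul_nonneg_left (hv.trans hvC) (rpow_pos_of_pos ht _)
  calc v ^ q ≤ (C * t ^ (-m)) ^ q := rpow_le_rpow hv hvC hq
    _ = C ^ q * t ^ (-(q * m)) := by
        rw [mul_rpow hC (rpow_nonneg ht.le _), ← rpow_mul ht.le]; ring_nf

end Real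

section Translate

variable {G : Type*} [NormedAddCommGroup G] [MeasurableSpace G] [MeasurableAdd G]
  {μ : Measure G} [μ.IsAddRightInvariant]

/-- Since `2 r ≤ ‖y - z‖`, at every `x` one of `‖x - y‖`, `‖x - z‖` is at least `r`, so the
product is dominated by `B` times the other factor. -/
theorem integral_comp_sub_mul_comp_sub_le {f g : G → ℝ} (hg : Integrable g μ)
    (hf0 : ∀ x, 0 ≤ f x) (hfg : ∀ x, f x ≤ g x) {r B : ℝ} (hB : ∀ w, r ≤ ‖w‖ → f w ≤ B) {y z : G}
    (hyz : 2 * r ≤ ‖y - z‖) :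
    ∫ x, f (x - y) * f (x - z) ∂μ ≤ 2 * B * ∫ x, g x ∂μ := by
  have hpt : ∀ x, f (x - y) * f (x - z) ≤ B * (g (x - y) + g (x - z)) := by
    intro x
    have htri : ‖y - z‖ ≤ ‖x - y‖ + ‖x - z‖ := by
      simpa [norm_sub_rev x y] using norm_sub_le_norm_sub_add_norm_sub y x z
    have hgy := (hf0 (x - y)).trans (hfg (x - y))
    have hgz := (hf0 (x - z)).trans (hfg (x - z))
    rcases le_total r ‖x - z‖ with hz | hy
    · have hBz := hB _ hz
      have hB0 := (hf0 (x - z)).trans hBz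
      calc f (x - y) * f (x - z) ≤ g (x - y) * B :=
            mul_le_mul (hfg _) hBz (hf0 _) hgy
        _ ≤ B * (g (x - y) + g (x - z)) := by nlinarith
    · have hBy := hB (x - y) (by linarith)
      have hB0 := (hf0 (x - y)).trans hBy
      calc f (x - y) * f (x - z) ≤ B * g (x - z) :=
            mul_le_mul hBy (hfg _) (hf0 _) hB0
        _ ≤ B * (g (x - y) + g (x - z)) := by nlinarith
  calc ∫ x, f (x - y) * f (x - z) ∂μ ≤ ∫ x, B * (g (x - y) + g (x - z)) ∂μ :=
        integral_mono_of_nonneg (.of_forall fun x => mul_nonneg (hf0 _) (hf0 _))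
          (((hg.comp_sub_right y).add (hg.comp_sub_right z)).const_mul B) (.of_forall hpt)
    _ = 2 * B * ∫ x, g x ∂μ := by
        rw [integral_const_mul, integral_add (hg.comp_sub_right y) (hg.comp_sub_right z),
          integral_sub_right_eq_self g y, integral_sub_right_eq_self g z]
        ring

end Translate

section Decay

variable {E : Type*} [NormedAddCommGroup E] [NormedSpace ℝ E] [FiniteDimensional ℝ E]
  [MeasurableSpace E] [BorelSpace E] {μ : Measure E} [μ.IsAddHaarMeasure]

theorem integral_one_add_norm_rpow_neg_pos {a : ℝ} (ha : (finrank ℝ E : ℝ) < a) :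
    0 < ∫ x, (1 + ‖x‖) ^ (-a) ∂μ := by
  rw [integral_pos_iff_support_of_nonneg (fun x => by positivity) (integrable_one_add_norm ha),
    Function.support_eq_univ (fun x => (by positivity : (0 : ℝ) < (1 + ‖x‖) ^ (-a)).ne')]
  exact Measure.measure_univ_pos.mpr (NeZero.ne μ)

theorem integral_comp_sub_mul_comp_sub_le_of_decay {f : E → ℝ} {C a : ℝ} (hf0 : ∀ x, 0 ≤ f x)
    (hf : ∀ x, f x ≤ C * (1 + ‖x‖) ^ (-a)) (ha : (finrank ℝ E : ℝ) < a) (y z : E) :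
    ∫ x, f (x - y) * f (x - z) ∂μ ≤
      2 ^ (a + 1) * C ^ 2 * (∫ x, (1 + ‖x‖) ^ (-a) ∂μ) * (1 + ‖y - z‖) ^ (-a) := by
  have ha0 : 0 < a := (Nat.cast_nonneg _).trans_lt ha
  have hC : 0 ≤ C := nonneg_of_mul_nonneg_left ((hf0 0).trans (hf 0)) (by positivity)
  set d := ‖y - z‖
  have hd : 0 ≤ d := norm_nonneg _
  have htail : ∀ w : E, d / 2 ≤ ‖w‖ → f w ≤ C * 2 ^ a * (1 + d) ^ (-a) := by
    intro w hw
    calc f w ≤ C * (1 + ‖w‖) ^ (-a) := hf w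
      _ ≤ C * ((1 + d) / 2) ^ (-a) := by
          refine mul_le_mul_of_nonneg_left (rpow_le_rpow_of_nonpos ?_ ?_ ?_) hC <;> linarith
      _ = C * 2 ^ a * (1 + d) ^ (-a) := by
          rw [div_rpow (by positivity) zero_le_two, rpow_neg zero_le_two, div_inv_eq_mul]; ring
  calc ∫ x, f (x - y) * f (x - z) ∂μ
      ≤ 2 * (C * 2 ^ a * (1 + d) ^ (-a)) * ∫ x, C * (1 + ‖x‖) ^ (-a) ∂μ :=
        integral_comp_sub_mul_comp_sub_le ((integrable_one_add_norm ha).const_mul C) hf0 hf htail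
          (by linarith)
    _ = 2 ^ (a + 1) * C ^ 2 * (∫ x, (1 + ‖x‖) ^ (-a) ∂μ) * (1 + d) ^ (-a) := by
        rw [integral_const_mul, rpow_add_one two_ne_zero]; ring

theorem integrable_rpow_comp_sub_mul_comp_sub {u : E → ℝ} {C m b : ℝ} (hu : Measurable u)
    (hu0 : ∀ x, 0 ≤ u x) (hupp : ∀ x, u x ≤ C * (1 + ‖x‖) ^ (-m))
    (hm : (finrank ℝ E : ℝ) < m) (hb : 0 ≤ b) (y z : E) :
    Integrable (fun x => u (x - y) ^ b * u (x - z)) μ := by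
  have hm0 : 0 ≤ m := (Nat.cast_nonneg _).trans hm.le
  have hC : 0 ≤ C := nonneg_of_mul_nonneg_left ((hu0 0).trans (hupp 0)) (by positivity)
  have hu_int : Integrable u μ :=
    ((integrable_one_add_norm hm).const_mul C).mono' hu.aestronglyMeasurable
      (.of_forall fun x => by rw [norm_of_nonneg (hu0 x)]; exact hupp x)
  have hu_le : ∀ w, u w ≤ C := fun w =>
    (hupp w).trans (mul_le_of_le_one_right hC
      (rpow_le_one_of_one_le_of_nonpos (by linarith [norm_nonneg w]) (by linarith)))
  have hmeas_y : Measurable fun x => u (x - y) ^ b := by fun_prop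
  refine (hu_int.comp_sub_right z).bdd_mul (c := C ^ b) hmeas_y.aestronglyMeasurable
    (.of_forall fun x => ?_)
  rw [norm_of_nonneg (rpow_nonneg (hu0 _) _)]
  exact rpow_le_rpow (hu0 _) (hu_le _) hb

theorem le_integral_rpow_comp_sub_mul_comp_sub {u : E → ℝ} {c m b : ℝ} (hc : 0 < c)
    (hm : 0 ≤ m) (hb : 0 ≤ b) (hlow : ∀ x, c * (1 + ‖x‖) ^ (-m) ≤ u x) {y z : E}
    (hint : Integrable (fun x => u (x - y) ^ b * u (x - z)) μ) :
    (c * 2 ^ (-m)) ^ (b + 1) * μ.real (ball 0 1) * (1 + ‖y - z‖) ^ (-m) ≤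
      ∫ x, u (x - y) ^ b * u (x - z) ∂μ := by
  set κ := c * 2 ^ (-m)
  set d := ‖y - z‖
  have hu0 : ∀ x, 0 ≤ u x := fun x => (by positivity : 0 ≤ c * (1 + ‖x‖) ^ (-m)).trans (hlow x)
  have hbound : ∀ x ∈ ball y 1, κ ^ (b + 1) * (1 + d) ^ (-m) ≤ u (x - y) ^ b * u (x - z) := by
    intro x hx
    have hxy : ‖x - y‖ < 1 := by rwa [mem_ball, dist_eq_norm] at hx
    have hxz : 1 + ‖x - z‖ ≤ 2 * (1 + d) := by
      have := norm_sub_le_norm_sub_add_norm_sub x y z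
      linarith [norm_nonneg (y - z)]
    have hy : κ ≤ u (x - y) :=
      calc κ ≤ c * (1 + ‖x - y‖) ^ (-m) := by
            refine mul_le_mul_of_nonneg_left (rpow_le_rpow_of_nonpos ?_ ?_ ?_) hc.le <;>
              linarith [norm_nonneg (x - y)]
        _ ≤ u (x - y) := hlow _
    have hz : κ * (1 + d) ^ (-m) ≤ u (x - z) :=
      calc κ * (1 + d) ^ (-m) = c * (2 * (1 + d)) ^ (-m) := by
            rw [mul_rpow zero_le_two (by positivity)]; ring
        _ ≤ c * (1 + ‖x - z‖) ^ (-m) := by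
            refine mul_le_mul_of_nonneg_left (rpow_le_rpow_of_nonpos ?_ hxz ?_) hc.le <;>
              linarith [norm_nonneg (x - z)]
        _ ≤ u (x - z) := hlow _
    calc κ ^ (b + 1) * (1 + d) ^ (-m) = κ ^ b * (κ * (1 + d) ^ (-m)) := by
          rw [rpow_add_one (by positivity)]; ring
      _ ≤ u (x - y) ^ b * u (x - z) :=
          mul_le_mul (rpow_le_rpow (by positivity) hy hb) hz (by positivity)
            (rpow_nonneg (hu0 _) _)
  calc κ ^ (b + 1) * μ.real (ball 0 1) * (1 + d) ^ (-m)
      = κ ^ (b + 1) * (1 + d) ^ (-m) * μ.real (ball y 1) := by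
        rw [Measure.addHaar_real_ball_center μ y 1]; ring
    _ ≤ ∫ x in ball y 1, u (x - y) ^ b * u (x - z) ∂μ :=
        setIntegral_ge_of_const_le_real measurableSet_ball measure_ball_lt_top.ne hbound
          hint.integrableOn
    _ ≤ ∫ x, u (x - y) ^ b * u (x - z) ∂μ :=
        setIntegral_le_integral hint
          (.of_forall fun x => mul_nonneg (rpow_nonneg (hu0 _) _) (hu0 _))

end Decay

theorem stmt13_general (N : ℕ) (s p α C₁ C₂ : ℝ) (hs0 : 0 < s)
    (hp : 2 < p) (hC1 : 0 < C₁)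
    (hα1 : (N : ℝ) + 2 * s < α) (hα2 : α < (p / 2) * ((N : ℝ) + 2 * s))
    (u : EuclideanSpace ℝ (Fin N) → ℝ) (hmeas : Measurable u) (hpos : ∀ x, 0 < u x)
    (hlow : ∀ x, C₁ / (1 + ‖x‖ ^ ((N : ℝ) + 2 * s)) ≤ u x)
    (hupp : ∀ x, u x ≤ C₂ / (1 + ‖x‖ ^ ((N : ℝ) + 2 * s))) :
    ∃ C > (0 : ℝ), ∀ R : ℝ, 1 ≤ R → ∀ y z : EuclideanSpace ℝ (Fin N),
      R ≤ ‖y‖ → R ≤ ‖z‖ → (2 / 3) * R ≤ ‖y - z‖ →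
      (∫ x, u (x - y) ^ (p / 2) * u (x - z) ^ (p / 2))
        ≤ C * R ^ ((N : ℝ) + 2 * s - α) * ∫ x, u (x - y) ^ (p - 1) * u (x - z) := by
  set m : ℝ := (N : ℝ) + 2 * s
  set q : ℝ := p / 2
  have hNm : (finrank ℝ (EuclideanSpace ℝ (Fin N)) : ℝ) < m := by
    rw [finrank_euclideanSpace_fin]; linarith
  have hNqm : (finrank ℝ (EuclideanSpace ℝ (Fin N)) : ℝ) < q * m := by linarith
  have hm0 : 0 ≤ m := (Nat.cast_nonneg _).trans hNm.le
  have hC2 : 0 < C₂ :=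
    (div_pos_iff_of_pos_right (by positivity)).mp ((hpos 0).trans_le (hupp 0))
  have hu0 : ∀ x, 0 ≤ u x := fun x => (hpos x).le
  have hlow' : ∀ x, C₁ / 2 * (1 + ‖x‖) ^ (-m) ≤ u x := fun x =>
    (Real.half_mul_one_add_rpow_neg_le_div hC1.le (norm_nonneg x) hm0).trans (hlow x)
  have hupp' : ∀ x, u x ≤ 2 ^ m * C₂ * (1 + ‖x‖) ^ (-m) := fun x =>
    (hupp x).trans (Real.div_one_add_rpow_le_two_rpow_mul hC2.le (norm_nonneg x) hm0)
  have hupp_q : ∀ x, u x ^ q ≤ (2 ^ m * C₂) ^ q * (1 + ‖x‖) ^ (-(q * m)) := fun x =>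
    Real.rpow_le_of_le_mul_rpow_neg (by positivity) (hu0 x) (by positivity) (hupp' x)
  obtain ⟨K, hK, hupper⟩ : ∃ K > 0, ∀ y z : EuclideanSpace ℝ (Fin N),
      ∫ x, u (x - y) ^ q * u (x - z) ^ q ≤ K * (1 + ‖y - z‖) ^ (-(q * m)) := by
    have hI := integral_one_add_norm_rpow_neg_pos (μ := volume) hNqm
    exact ⟨_, by positivity, integral_comp_sub_mul_comp_sub_le_of_decay
      (fun x => rpow_nonneg (hu0 x) q) hupp_q hNqm⟩
  obtain ⟨ζ, hζ, hlower⟩ : ∃ ζ > 0, ∀ y z : EuclideanSpace ℝ (Fin N),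
      ζ * (1 + ‖y - z‖) ^ (-m) ≤ ∫ x, u (x - y) ^ (p - 1) * u (x - z) := by
    have hball : 0 < volume.real (ball (0 : EuclideanSpace ℝ (Fin N)) 1) :=
      ENNReal.toReal_pos (measure_ball_pos volume 0 one_pos).ne' measure_ball_lt_top.ne
    exact ⟨_, by positivity, fun y z => le_integral_rpow_comp_sub_mul_comp_sub (by positivity)
      hm0 (by linarith) hlow'
      (integrable_rpow_comp_sub_mul_comp_sub hmeas hu0 hupp' hNm (by linarith) y z)⟩
  exact ⟨K * (2 / 3) ^ (-(q * m - m)) / ζ, by positivity, fun R hR y z _ _ hyz =>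
    Real.le_mul_rpow_mul_of_decay_bounds hK.le hζ (by norm_num) hR
      (by linarith [norm_nonneg (y - z)]) hα1.le (by linarith) (hupper y z) (hlower y z)⟩

theorem stmt13 (N : ℕ) (hN : 1 ≤ N) (s p α C₁ C₂ : ℝ) (hs0 : 0 < s) (hs1 : s < 1)
    (hp : 2 < p) (hC1 : 0 < C₁) (hC12 : C₁ < C₂)
    (hα1 : (N : ℝ) + 2 * s < α) (hα2 : α < (p / 2) * ((N : ℝ) + 2 * s))
    (u : EuclideanSpace ℝ (Fin N) → ℝ) (hmeas : Measurable u) (hpos : ∀ x, 0 < u x)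
    (hlow : ∀ x, C₁ / (1 + ‖x‖ ^ ((N : ℝ) + 2 * s)) ≤ u x)
    (hupp : ∀ x, u x ≤ C₂ / (1 + ‖x‖ ^ ((N : ℝ) + 2 * s))) :
    ∃ C > (0 : ℝ), ∀ R : ℝ, 1 ≤ R → ∀ y z : EuclideanSpace ℝ (Fin N),
      R ≤ ‖y‖ → R ≤ ‖z‖ → (2 / 3) * R ≤ ‖y - z‖ →
      (∫ x, u (x - y) ^ (p / 2) * u (x - z) ^ (p / 2))
        ≤ C * R ^ ((N : ℝ) + 2 * s - α) * ∫ x, u (x - y) ^ (p - 1) * u (x - z) :=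
  stmt13_general N s p α C₁ C₂ hs0 hp hC1 hα1 hα2 u hmeas hpos hlow hupp
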